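/- arXiv:2404.12956 — 5 statements merged into one kernel-verified Lean document; each statement's English description precedes it below -/
import Mathlib

section
/- Let T ⊂ R² be the reference triangle with vertices (0,0), (1,0), (0,1), F the edge on the x-axis, and let η_F(x,y) = x(1−x−y) be the edge bubble (product of the barycentric coordinates of the two endpoints of F) and d_F(x,y) = y the barycentric coordinate of the opposite vertex. For 0 < ε ≤ 1 define η_{F,ε}(x,y) = exp(−(1/ε) y) · x(1−x−y). Then η_{F,ε} ∈ H¹(T), η_{F,ε} = η_F on ∂T, and there is a constant C independent of ε with ‖η_{F,ε}‖_{L²(T)} ≤ C ε^{1/2}. -/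
/-!
Both `η_{F,ε}` and its gradient are continuous on the compact triangle, hence in `L²(T)`.
On `∂T` either `y = 0`, where the exponential factor is `1`, or the polynomial bubble vanishes.
For the `L²` bound, `0 ≤ x(1-x-y) ≤ 1` on `T` gives `η_{F,ε}² ≤ exp(-2y/ε)`; enlarging `T` to
the strip `[0,1] × [0,∞)` along `F` and integrating the exponential in `y` gives
`∫_T η_{F,ε}² ≤ ε/2`.
-/

open MeasureTheory

/-- The reference triangle with vertices `(0,0)`, `(1,0)`, `(0,1)`. -/
def refTriangle : Set (EuclideanSpace ℝ (Fin 2)) :=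
  {p | 0 ≤ p 0 ∧ 0 ≤ p 1 ∧ p 0 + p 1 ≤ 1}

/-- The polynomial edge bubble `η_F(x,y) = x(1-x-y)` for the bottom edge `F`. -/
noncomputable def edgeBubble (p : EuclideanSpace ℝ (Fin 2)) : ℝ :=
  p 0 * (1 - p 0 - p 1)

/-- The modified face bubble `η_{F,ε}(x,y) = exp(-y/ε) x(1-x-y)`. -/
noncomputable def expBubble (ε : ℝ) (p : EuclideanSpace ℝ (Fin 2)) : ℝ :=
  Real.exp (-(p 1 / ε)) * (p 0 * (1 - p 0 - p 1))

open Set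

theorem Continuous.memLp_restrict_of_isCompact {X E : Type*} [TopologicalSpace X]
    [MeasurableSpace X] [OpensMeasurableSpace X] [SecondCountableTopology X]
    [NormedAddCommGroup E] {μ : Measure X} [IsFiniteMeasureOnCompacts μ] {f : X → E}
    (hf : Continuous f) {K : Set X} (hK : IsCompact K) (hKm : MeasurableSet K) (q : ENNReal) : MemLp f q (μ.restrict K) := by
  have : IsFiniteMeasure (μ.restrict K) := isFiniteMeasure_restrict.2 hK.measure_lt_top.ne
  obtain ⟨C, hC⟩ := hK.exists_bound_of_continuousOn hf.continuousOn
  exact MemLp.of_bound hf.aestronglyMeasurable C (ae_restrict_of_forall_mem hKm hC)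

theorem ContDiff.continuous_gradient {F : Type*} [NormedAddCommGroup F] [InnerProductSpace ℝ F]
    [CompleteSpace F] {f : F → ℝ} (hf : ContDiff ℝ 1 f) : Continuous (gradient f) :=
  (InnerProductSpace.toDual ℝ F).symm.continuous.comp (hf.continuous_fderiv one_ne_zero)

namespace refTriangle

theorem isClosed : IsClosed refTriangle :=
  (isClosed_le continuous_const (PiLp.continuous_apply 2 _ 0)).inter
    ((isClosed_le continuous_const (PiLp.continuous_apply 2 _ 1)).inter
      (isClosed_le ((PiLp.continuous_apply 2 _ 0).add (PiLp.continuous_apply 2 _ 1))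
        continuous_const))

theorem subset_closedBall : refTriangle ⊆ Metric.closedBall 0 1 := by
  rintro p ⟨hx, hy, hxy⟩
  rw [mem_closedBall_zero_iff, EuclideanSpace.norm_eq, Fin.sum_univ_two, Real.sqrt_le_one]
  simp only [Real.norm_eq_abs, sq_abs]
  nlinarith

theorem isCompact : IsCompact refTriangle :=
  Metric.isCompact_of_isClosed_isBounded isClosed
    (Metric.isBounded_closedBall.subset subset_closedBall)

theorem frontier_subset :
    frontier refTriangle ⊆ {p | p 1 = 0 ∨ p 0 = 0 ∨ p 0 + p 1 = 1} := by
  intro p hp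
  have hopen : IsOpen {q : EuclideanSpace ℝ (Fin 2) | 0 < q 0 ∧ 0 < q 1 ∧ q 0 + q 1 < 1} :=
    (isOpen_lt continuous_const (PiLp.continuous_apply 2 _ 0)).inter
      ((isOpen_lt continuous_const (PiLp.continuous_apply 2 _ 1)).inter
        (isOpen_lt ((PiLp.continuous_apply 2 _ 0).add (PiLp.continuous_apply 2 _ 1))
          continuous_const))
  have hint : {q : EuclideanSpace ℝ (Fin 2) | 0 < q 0 ∧ 0 < q 1 ∧ q 0 + q 1 < 1} ⊆
      interior refTriangle :=
    interior_maximal (fun q hq => ⟨hq.1.le, hq.2.1.le, hq.2.2.le⟩) hopen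
  obtain ⟨hx, hy, hxy⟩ : p ∈ refTriangle := isClosed.frontier_subset hp
  by_contra h
  simp only [mem_ofPred_eq, not_or] at h
  exact hp.2 (hint ⟨hx.lt_of_ne' h.2.1, hy.lt_of_ne' h.1, hxy.lt_of_ne h.2.2⟩)

end refTriangle

theorem contDiff_expBubble (ε : ℝ) {n : WithTop ℕ∞} : ContDiff ℝ n (expBubble ε) := by
  unfold expBubble
  fun_prop

theorem continuous_expBubble (ε : ℝ) : Continuous (expBubble ε) :=
  (contDiff_expBubble ε (n := 0)).continuous

theorem expBubble_eq_edgeBubble {ε : ℝ} {p : EuclideanSpace ℝ (Fin 2)}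
    (h : p 1 = 0 ∨ p 0 = 0 ∨ p 0 + p 1 = 1) : expBubble ε p = edgeBubble p := by
  unfold expBubble edgeBubble
  rcases h with h | h | h
  · simp [h]
  · simp [h]
  · rw [show 1 - p 0 - p 1 = 0 by linarith]
    simp

def planeEquivProd : EuclideanSpace ℝ (Fin 2) ≃ᵐ ℝ × ℝ :=
  (MeasurableEquiv.toLp 2 (Fin 2 → ℝ)).symm.trans MeasurableEquiv.finTwoArrow

theorem measurePreserving_planeEquivProd : MeasurePreserving planeEquivProd :=
  (volume_preserving_finTwoArrow ℝ).comp
    (EuclideanSpace.volume_preserving_symm_measurableEquiv_toLp (Fin 2))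

@[simp]
theorem planeEquivProd_apply (p : EuclideanSpace ℝ (Fin 2)) : planeEquivProd p = (p 0, p 1) :=
  rfl

def edgeStrip : Set (EuclideanSpace ℝ (Fin 2)) :=
  planeEquivProd ⁻¹' (Icc (0 : ℝ) 1 ×ˢ Ici (0 : ℝ))

theorem refTriangle_subset_edgeStrip : refTriangle ⊆ edgeStrip := by
  rintro p ⟨hx, hy, hxy⟩
  simp only [edgeStrip, mem_preimage, planeEquivProd_apply, mem_prod, mem_Icc, mem_Ici]
  exact ⟨⟨hx, by linarith⟩, hy⟩

theorem setIntegral_edgeStrip_comp_apply_one (g : ℝ → ℝ) :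
    ∫ p in edgeStrip, g (p 1) = ∫ y in Ici 0, g y := by
  calc ∫ p in edgeStrip, g (p 1)
      = ∫ q in Icc (0 : ℝ) 1 ×ˢ Ici (0 : ℝ), (fun _ => (1 : ℝ)) q.1 * g q.2 := by
        simp only [one_mul]
        exact measurePreserving_planeEquivProd.setIntegral_preimage_emb
          planeEquivProd.measurableEmbedding (fun q => g q.2) _
    _ = ∫ y in Ici 0, g y := by
        rw [Measure.volume_eq_prod, setIntegral_prod_mul (fun _ => (1 : ℝ)) g]
        simp

theorem integrableOn_edgeStrip_comp_apply_one {g : ℝ → ℝ} (hg : IntegrableOn g (Ici 0)) :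
    IntegrableOn (fun p => g (p 1)) edgeStrip := by
  have hprod : IntegrableOn (fun q : ℝ × ℝ => (fun _ => (1 : ℝ)) q.1 * g q.2)
      (Icc (0 : ℝ) 1 ×ˢ Ici (0 : ℝ)) := by
    rw [IntegrableOn, Measure.volume_eq_prod, ← Measure.prod_restrict]
    exact (integrable_const (1 : ℝ)).mul_prod hg
  simp only [one_mul] at hprod
  exact (measurePreserving_planeEquivProd.integrableOn_comp_preimage
    planeEquivProd.measurableEmbedding).2 hprod

theorem integral_Ici_exp_neg_mul {c : ℝ} (hc : 0 < c) :
    ∫ y in Ici 0, Real.exp (-c * y) = 1 / c := by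
  rw [integral_Ici_eq_integral_Ioi, integral_exp_mul_Ioi (neg_lt_zero.2 hc)]
  field_simp
  simp

theorem expBubble_sq_le {ε : ℝ} {p : EuclideanSpace ℝ (Fin 2)}
    (hp : p ∈ refTriangle) : expBubble ε p ^ 2 ≤ Real.exp (-(2 / ε) * p 1) := by
  obtain ⟨hx, hy, hxy⟩ := hp
  have hbubble : (p 0 * (1 - p 0 - p 1)) ^ 2 ≤ 1 := by
    rw [sq_le_one_iff_abs_le_one, abs_le]
    constructor <;> nlinarith
  calc expBubble ε p ^ 2 = Real.exp (-(2 / ε) * p 1) * (p 0 * (1 - p 0 - p 1)) ^ 2 := by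
        rw [expBubble, mul_pow, ← Real.exp_nat_mul]
        ring_nf
    _ ≤ Real.exp (-(2 / ε) * p 1) :=
        mul_le_of_le_one_right (Real.exp_pos _).le hbubble

theorem setIntegral_refTriangle_expBubble_sq_le {ε : ℝ} (hε : 0 < ε) :
    ∫ p in refTriangle, expBubble ε p ^ 2 ≤ ε / 2 := by
  have hc : 0 < 2 / ε := by positivity
  have hlayer : IntegrableOn (fun p : EuclideanSpace ℝ (Fin 2) => Real.exp (-(2 / ε) * p 1))
      edgeStrip :=
    integrableOn_edgeStrip_comp_apply_one ((exp_neg_integrableOn_Ioi 0 hc).congr_set_ae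
      Ioi_ae_eq_Ici.symm)
  calc ∫ p in refTriangle, expBubble ε p ^ 2
      ≤ ∫ p in refTriangle, Real.exp (-(2 / ε) * p 1) :=
        setIntegral_mono_on (((continuous_expBubble ε).pow 2).continuousOn.integrableOn_compact
          refTriangle.isCompact) (hlayer.mono_set refTriangle_subset_edgeStrip)
          refTriangle.isClosed.measurableSet fun p hp => expBubble_sq_le hp
    _ ≤ ∫ p in edgeStrip, Real.exp (-(2 / ε) * p 1) :=
        setIntegral_mono_set hlayer (ae_of_all _ fun p => (Real.exp_pos _).le)
          refTriangle_subset_edgeStrip.eventuallyLE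
    _ = ε / 2 := by
        rw [setIntegral_edgeStrip_comp_apply_one (fun y => Real.exp (-(2 / ε) * y)),
          integral_Ici_exp_neg_mul hc, one_div_div]

/-- `η_{F,ε} ∈ H¹(T)` (it and its gradient are in `L²(T)`),
`η_{F,ε} = η_F` on `∂T`, and `‖η_{F,ε}‖_{L²(T)} ≤ C ε^{1/2}` with `C` independent of `ε`. -/
theorem stmt_5 :
    ∃ C > 0, ∀ ε : ℝ, 0 < ε → ε ≤ 1 →
      MemLp (expBubble ε) 2 (volume.restrict refTriangle) ∧
      MemLp (fun p => gradient (expBubble ε) p) 2 (volume.restrict refTriangle) ∧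
      (∀ p ∈ frontier refTriangle, expBubble ε p = edgeBubble p) ∧
      Real.sqrt (∫ p in refTriangle, (expBubble ε p) ^ 2) ≤ C * Real.sqrt ε := by
  refine ⟨1, one_pos, fun ε hε _ => ⟨?_, ?_, ?_, ?_⟩⟩
  · exact (continuous_expBubble ε).memLp_restrict_of_isCompact refTriangle.isCompact
      refTriangle.isClosed.measurableSet 2
  · exact (contDiff_expBubble ε).continuous_gradient.memLp_restrict_of_isCompact
      refTriangle.isCompact refTriangle.isClosed.measurableSet 2
  · exact fun p hp => expBubble_eq_edgeBubble (refTriangle.frontier_subset hp)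
  · rw [one_mul]
    exact Real.sqrt_le_sqrt ((setIntegral_refTriangle_expBubble_sq_le hε).trans (by linarith))
end

section
/- Let T ⊂ R² be the reference triangle with vertices (0,0), (1,0), (0,1), F the edge on the x-axis, η_{F,ε}(x,y) = exp(−y/ε) x(1−x−y) for 0 < ε ≤ 1. Then there is a constant C independent of ε such that ‖∇η_{F,ε}‖_{L²(T)} ≤ C ε^{−1/2}. -/
open MeasureTheory

/-!
On `T` the gradient is `∇η = e^{-y/ε} (1 - 2x - y, -x - x(1 - x - y)/ε)`, whose components
are bounded by `1` and `2/ε`, so `|∇η|² ≤ 5 ε⁻² e^{-2y/ε}` as `ε ≤ 1`. Enlarging `T` to the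
unit square, the integral of this bound factors through `∫₀^∞ e^{-2y/ε} dy = ε/2`, hence
`‖∇η‖²_{L²(T)} ≤ 5/(2ε)`.
-/

open Real Set

lemma setIntegral_exp_neg_mul_le {c : ℝ} (hc : 0 < c) {s : Set ℝ} (hs : s ⊆ Ici 0) :
    ∫ y in s, exp (-(c * y)) ≤ c⁻¹ := by
  simp_rw [← neg_mul]
  calc ∫ y in s, exp (-c * y) ≤ ∫ y in Ioi 0, exp (-c * y) :=
        setIntegral_mono_set (integrableOn_exp_mul_Ioi (by linarith) 0)
          (ae_of_all _ fun _ => (exp_pos _).le)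
          (hs.eventuallyLE.trans Ioi_ae_eq_Ici.symm.le)
    _ = c⁻¹ := by rw [integral_exp_mul_Ioi (by linarith)]; simp

lemma setIntegral_rectangle_comp_apply_one (s t : Set ℝ) (g : ℝ → ℝ) :
    ∫ p in {p : EuclideanSpace ℝ (Fin 2) | p 0 ∈ s ∧ p 1 ∈ t}, g (p 1) =
      volume.real s * ∫ y in t, g y := by
  let e := (MeasurableEquiv.toLp 2 (Fin 2 → ℝ)).symm.trans MeasurableEquiv.finTwoArrow
  have he : MeasurePreserving e :=
    (EuclideanSpace.volume_preserving_symm_measurableEquiv_toLp _).trans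
      (volume_preserving_finTwoArrow ℝ)
  calc ∫ p in {p : EuclideanSpace ℝ (Fin 2) | p 0 ∈ s ∧ p 1 ∈ t}, g (p 1)
      = ∫ z in s ×ˢ t, g z.2 :=
        he.setIntegral_preimage_emb e.measurableEmbedding (fun z => g z.2) (s ×ˢ t)
    _ = volume.real s * ∫ y in t, g y := by
        rw [Measure.volume_eq_prod]
        simpa using setIntegral_prod_mul (fun _ => (1 : ℝ)) g s t

def unitSquare : Set (EuclideanSpace ℝ (Fin 2)) :=
  {p | p 0 ∈ Icc 0 1 ∧ p 1 ∈ Icc 0 1}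

lemma isCompact_unitSquare : IsCompact unitSquare := by
  convert (PiLp.homeomorph 2 (fun _ : Fin 2 => ℝ)).isCompact_preimage.mpr
    (isCompact_univ_pi fun _ => isCompact_Icc (a := (0 : ℝ)) (b := 1)) using 1
  ext p
  simp [unitSquare, Pi.le_def, Fin.forall_fin_two, PiLp.homeomorph]
  tauto

lemma measurableSet_refTriangle : MeasurableSet refTriangle := by
  unfold refTriangle
  measurability

lemma refTriangle_subset_unitSquare : refTriangle ⊆ unitSquare :=
  fun _ ⟨hx, hy, hxy⟩ => ⟨⟨hx, by linarith⟩, ⟨hy, by linarith⟩⟩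

lemma hasGradientAt_expBubble (ε : ℝ) (p : EuclideanSpace ℝ (Fin 2)) :
    HasGradientAt (expBubble ε)
      (exp (-(p 1 / ε)) • !₂[1 - 2 * p 0 - p 1, -(p 0 + p 0 * (1 - p 0 - p 1) / ε)]) p := by
  have hx := (EuclideanSpace.proj (𝕜 := ℝ) (0 : Fin 2)).hasFDerivAt (x := p)
  have hy := (EuclideanSpace.proj (𝕜 := ℝ) (1 : Fin 2)).hasFDerivAt (x := p)
  have h := ((hy.mul_const ε⁻¹).neg.exp).mul (hx.mul (((hasFDerivAt_const 1 p).sub hx).sub hy))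
  rw [hasGradientAt_iff_hasFDerivAt]
  refine h.congr_fderiv ?_
  ext w
  simp [inner, Fin.sum_univ_two, div_eq_mul_inv]
  ring

lemma sq_norm_gradient_expBubble (ε : ℝ) (p : EuclideanSpace ℝ (Fin 2)) :
    ‖gradient (expBubble ε) p‖ ^ 2 =
      exp (-(2 / ε * p 1)) *
        ((1 - 2 * p 0 - p 1) ^ 2 + (p 0 + p 0 * (1 - p 0 - p 1) / ε) ^ 2) := by
  rw [(hasGradientAt_expBubble ε p).gradient, norm_smul, mul_pow, EuclideanSpace.real_norm_sq_eq,
    Fin.sum_univ_two, Real.norm_of_nonneg (exp_pos _).le, ← exp_nat_mul]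
  simp only [Matrix.cons_val_zero, Matrix.cons_val_one, neg_sq]
  ring_nf

lemma sq_norm_gradient_expBubble_le {ε : ℝ} (hε : 0 < ε) (hε1 : ε ≤ 1)
    {p : EuclideanSpace ℝ (Fin 2)} (hp : p ∈ refTriangle) :
    ‖gradient (expBubble ε) p‖ ^ 2 ≤ 5 / ε ^ 2 * exp (-(2 / ε * p 1)) := by
  obtain ⟨hx, hy, hxy⟩ := hp
  rw [sq_norm_gradient_expBubble, mul_comm]
  gcongr
  have hdx : (1 - 2 * p 0 - p 1) ^ 2 ≤ 1 / ε ^ 2 := by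
    rw [le_div_iff₀ (by positivity)]
    have : (1 - 2 * p 0 - p 1) ^ 2 ≤ 1 := by nlinarith
    nlinarith [pow_le_one₀ hε.le hε1 (n := 2)]
  have hdy : (p 0 + p 0 * (1 - p 0 - p 1) / ε) ^ 2 ≤ (2 / ε) ^ 2 := by
    have hbubble_nonneg : 0 ≤ p 0 * (1 - p 0 - p 1) / ε := by apply div_nonneg <;> nlinarith
    have hbubble_le : p 0 * (1 - p 0 - p 1) / ε ≤ 1 / ε := by gcongr; nlinarith
    have hx_le : p 0 ≤ 1 / ε := by rw [le_div_iff₀ hε]; nlinarith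
    gcongr
    linarith [show 2 / ε = 1 / ε + 1 / ε by ring]
  calc _ ≤ 1 / ε ^ 2 + (2 / ε) ^ 2 := add_le_add hdx hdy
    _ = 5 / ε ^ 2 := by ring

lemma integral_sq_norm_gradient_expBubble_le {ε : ℝ} (hε : 0 < ε) (hε1 : ε ≤ 1) :
    ∫ p in refTriangle, ‖gradient (expBubble ε) p‖ ^ 2 ≤ 5 / (2 * ε) := by
  set g := fun p : EuclideanSpace ℝ (Fin 2) => 5 / ε ^ 2 * exp (-(2 / ε * p 1))
  have hg_nonneg : ∀ p, 0 ≤ g p := fun p => by positivity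
  have hg_int : IntegrableOn g unitSquare :=
    (Continuous.continuousOn (by fun_prop)).integrableOn_compact isCompact_unitSquare
  calc ∫ p in refTriangle, ‖gradient (expBubble ε) p‖ ^ 2 ≤ ∫ p in refTriangle, g p :=
        integral_mono_of_nonneg (ae_of_all _ fun _ => by positivity)
          (hg_int.mono_set refTriangle_subset_unitSquare)
          (ae_restrict_of_forall_mem measurableSet_refTriangle
            fun _ hp => sq_norm_gradient_expBubble_le hε hε1 hp)
    _ ≤ ∫ p in unitSquare, g p :=
        setIntegral_mono_set hg_int (ae_of_all _ hg_nonneg)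
          refTriangle_subset_unitSquare.eventuallyLE
    _ = 5 / ε ^ 2 * ∫ y in Icc 0 1, exp (-(2 / ε * y)) := by
        rw [← integral_const_mul]
        exact (setIntegral_rectangle_comp_apply_one (Icc 0 1) (Icc 0 1)
          fun y => 5 / ε ^ 2 * exp (-(2 / ε * y))).trans (by simp)
    _ ≤ 5 / ε ^ 2 * (2 / ε)⁻¹ := by
        gcongr
        exact setIntegral_exp_neg_mul_le (by positivity) Icc_subset_Ici_self
    _ = 5 / (2 * ε) := by field_simp

/-- `‖∇η_{F,ε}‖_{L²(T)} ≤ C ε^{-1/2}` with `C` independent of `ε`. -/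
theorem stmt_6 :
    ∃ C > 0, ∀ ε : ℝ, 0 < ε → ε ≤ 1 →
      Real.sqrt (∫ p in refTriangle, ‖gradient (expBubble ε) p‖ ^ 2) ≤
        C / Real.sqrt ε := by
  refine ⟨2, two_pos, fun ε hε hε1 => ?_⟩
  calc √(∫ p in refTriangle, ‖gradient (expBubble ε) p‖ ^ 2) ≤ √(2 ^ 2 / ε) := by
        gcongr
        calc _ ≤ 5 / (2 * ε) := integral_sq_norm_gradient_expBubble_le hε hε1
          _ ≤ 2 ^ 2 / ε := by rw [div_le_div_iff₀ (by positivity) hε]; nlinarith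
    _ = 2 / √ε := by rw [sqrt_div' _ hε.le, sqrt_sq zero_le_two]
end

section
/- Let T ⊂ R² be the reference triangle with vertices (0,0), (1,0), (0,1), F the bottom edge, and for 0 < ε ≤ 1 let η̃_{F,ε}(x,y) = x(1−x−y)(1 − y/ε) for y < ε and 0 for y ≥ ε. Then there exists C independent of ε with ‖η̃_{F,ε}‖_{L²(T)} ≤ C ε^{1/2} and ‖∇η̃_{F,ε}‖_{L²(T)} ≤ C ε^{−1/2}. -/
open MeasureTheory

/-- The piecewise polynomial modified face bubble
`η̃_{F,ε}(x,y) = x(1-x-y)(1 - y/ε)` for `y < ε`, and `0` for `y ≥ ε`. -/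
noncomputable def pwBubble (ε : ℝ) (p : EuclideanSpace ℝ (Fin 2)) : ℝ :=
  if p 1 < ε then p 0 * (1 - p 0 - p 1) * (1 - p 1 / ε) else 0

/-- The (a.e. defined) gradient of `η̃_{F,ε}`: the gradient of the smooth piece
`x(1-x-y)(1-y/ε)` on the strip `{y < ε}` and `0` elsewhere. -/
noncomputable def pwBubbleGrad (ε : ℝ) (p : EuclideanSpace ℝ (Fin 2)) :
    EuclideanSpace ℝ (Fin 2) :=
  if p 1 < ε then
    gradient (fun q : EuclideanSpace ℝ (Fin 2) => q 0 * (1 - q 0 - q 1) * (1 - q 1 / ε)) p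
  else 0

/-! On `T` the bubble vanishes off the strip `y < ε`, which lies in the box `[0,1] × [0,ε]` and
so has area at most `ε`. On the strip every factor of `x(1-x-y)(1-y/ε)` lies in `[0,1]`, and
differentiating the factor `1 - y/ε` costs `1/ε`, so `|∇η̃| ≤ 3/ε`. Hence
`‖η̃‖² ≤ ε` and `‖∇η̃‖² ≤ 9/ε`, and `C = 3` works. -/

theorem EuclideanSpace.norm_le_abs_add_abs (v : EuclideanSpace ℝ (Fin 2)) :
    ‖v‖ ≤ |v 0| + |v 1| := by
  rw [EuclideanSpace.norm_eq, Real.sqrt_le_iff, Fin.sum_univ_two]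
  simp only [Real.norm_eq_abs]
  exact ⟨by positivity, by nlinarith [abs_nonneg (v 0), abs_nonneg (v 1)]⟩

theorem setIntegral_le_mul_measureReal_of_eq_zero_off {α : Type*} [MeasurableSpace α]
    {μ : Measure α} {s t : Set α} {g : α → ℝ} {M : ℝ} (ht : MeasurableSet t)
    (hst : μ (s ∩ t) < ⊤) (hg : ∀ x ∉ t, g x = 0) (hM : ∀ x ∈ s ∩ t, ‖g x‖ ≤ M) :
    ∫ x in s, g x ∂μ ≤ M * μ.real (s ∩ t) := by
  have hgt : t.indicator g = g :=
    Set.indicator_eq_self.2 fun x hx => by_contra fun h => hx (hg x h)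
  calc ∫ x in s, g x ∂μ = ∫ x in s ∩ t, g x ∂μ := by rw [← setIntegral_indicator ht, hgt]
    _ ≤ ‖∫ x in s ∩ t, g x ∂μ‖ := le_abs_self _
    _ ≤ M * μ.real (s ∩ t) := norm_setIntegral_le_of_norm_le_const hst hM

theorem measurableSet_strip (ε : ℝ) : MeasurableSet {p : EuclideanSpace ℝ (Fin 2) | p 1 < ε} :=
  measurableSet_lt (by fun_prop) measurable_const

theorem volume_refTriangle_inter_strip_le (ε : ℝ) :
    volume (refTriangle ∩ {p | p 1 < ε}) ≤ ENNReal.ofReal ε := by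
  let box := (MeasurableEquiv.toLp 2 (Fin 2 → ℝ)).symm ⁻¹' Set.Icc 0 ![1, ε]
  have hsub : refTriangle ∩ {p | p 1 < ε} ⊆ box := by
    rintro p ⟨⟨hx, hy, hxy⟩, hyε⟩
    simp only [box, Set.mem_preimage, MeasurableEquiv.toLp_symm_apply, Set.mem_Icc, Pi.le_def,
      Pi.zero_apply, Fin.forall_fin_two, Matrix.cons_val_zero, Matrix.cons_val_one]
    exact ⟨⟨hx, hy⟩, by linarith, hyε.le⟩
  calc volume (refTriangle ∩ {p | p 1 < ε}) ≤ volume box := measure_mono hsub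
    _ = ENNReal.ofReal ε := by
      rw [(EuclideanSpace.volume_preserving_symm_measurableEquiv_toLp (Fin 2)).measure_preimage
        measurableSet_Icc.nullMeasurableSet, Real.volume_Icc_pi]
      simp

theorem measureReal_refTriangle_inter_strip_le {ε : ℝ} (hε : 0 ≤ ε) :
    volume.real (refTriangle ∩ {p | p 1 < ε}) ≤ ε :=
  ENNReal.toReal_le_of_le_ofReal hε (volume_refTriangle_inter_strip_le ε)

theorem volume_refTriangle_inter_strip_lt_top (ε : ℝ) :
    volume (refTriangle ∩ {p | p 1 < ε}) < ⊤ :=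
  (volume_refTriangle_inter_strip_le ε).trans_lt ENNReal.ofReal_lt_top

theorem hasGradientAt_pwBubble_polynomial (ε : ℝ) (p : EuclideanSpace ℝ (Fin 2)) :
    HasGradientAt (fun q : EuclideanSpace ℝ (Fin 2) => q 0 * (1 - q 0 - q 1) * (1 - q 1 / ε))
      !₂[(1 - p 1 / ε) * (1 - 2 * p 0 - p 1),
        -(p 0 * (1 - p 0 - p 1) / ε) - (1 - p 1 / ε) * p 0] p := by
  have hx : HasFDerivAt (fun q : EuclideanSpace ℝ (Fin 2) => q 0)
      (EuclideanSpace.proj 0 : EuclideanSpace ℝ (Fin 2) →L[ℝ] ℝ) p :=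
    (EuclideanSpace.proj 0 : EuclideanSpace ℝ (Fin 2) →L[ℝ] ℝ).hasFDerivAt
  have hy : HasFDerivAt (fun q : EuclideanSpace ℝ (Fin 2) => q 1)
      (EuclideanSpace.proj 1 : EuclideanSpace ℝ (Fin 2) →L[ℝ] ℝ) p :=
    (EuclideanSpace.proj 1 : EuclideanSpace ℝ (Fin 2) →L[ℝ] ℝ).hasFDerivAt
  refine ((hx.mul ((hx.const_sub 1).sub hy)).mul
    ((hy.mul_const ε⁻¹).const_sub 1)).congr_fderiv ?_
  ext v
  simp [PiLp.inner_apply, Fin.sum_univ_two]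
  ring

theorem abs_pwBubble_le_one {ε : ℝ} (hε : 0 < ε) {p : EuclideanSpace ℝ (Fin 2)}
    (hp : p ∈ refTriangle) : |pwBubble ε p| ≤ 1 := by
  obtain ⟨hx, hy, hxy⟩ := hp
  unfold pwBubble
  split_ifs with hyε
  · have hyε' : p 1 / ε < 1 := (div_lt_one hε).2 hyε
    have : 0 ≤ p 1 / ε := div_nonneg hy hε.le
    rw [abs_of_nonneg (mul_nonneg (mul_nonneg hx (by linarith)) (by linarith))]
    exact mul_le_one₀ (mul_le_one₀ (by linarith) (by linarith) (by linarith)) (by linarith)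
      (by linarith)
  · simp

theorem norm_pwBubbleGrad_le {ε : ℝ} (hε : 0 < ε) (hε1 : ε ≤ 1) {p : EuclideanSpace ℝ (Fin 2)}
    (hp : p ∈ refTriangle) : ‖pwBubbleGrad ε p‖ ≤ 3 / ε := by
  obtain ⟨hx, hy, hxy⟩ := hp
  unfold pwBubbleGrad
  split_ifs with hyε
  · rw [(hasGradientAt_pwBubble_polynomial ε p).gradient]
    refine (EuclideanSpace.norm_le_abs_add_abs _).trans ?_
    have hyε' : p 1 / ε < 1 := (div_lt_one hε).2 hyε
    have : 0 ≤ p 1 / ε := div_nonneg hy hε.le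
    have hbubble : 0 ≤ p 0 * (1 - p 0 - p 1) := mul_nonneg hx (by linarith)
    have hbubble' : p 0 * (1 - p 0 - p 1) ≤ 1 := by nlinarith
    have hx_deriv : |(1 - p 1 / ε) * (1 - 2 * p 0 - p 1)| ≤ 1 := by
      rw [abs_mul]
      exact mul_le_one₀ (abs_le.2 ⟨by linarith, by linarith⟩) (abs_nonneg _)
        (abs_le.2 ⟨by linarith, by linarith⟩)
    have hy_deriv : |-(p 0 * (1 - p 0 - p 1) / ε) - (1 - p 1 / ε) * p 0| ≤ 1 / ε + 1 := by
      rw [← neg_add', abs_neg, abs_of_nonneg (by positivity)]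
      exact add_le_add (div_le_div_of_nonneg_right hbubble' hε.le)
        (mul_le_one₀ (by linarith) hx (by linarith))
    have : 1 ≤ 1 / ε := one_le_one_div hε hε1
    have : 3 / ε = 3 * (1 / ε) := by ring
    simp only [Matrix.cons_val_zero, Matrix.cons_val_one]
    linarith
  · rw [norm_zero]
    positivity

theorem setIntegral_refTriangle_pwBubble_sq_le {ε : ℝ} (hε : 0 < ε) :
    ∫ p in refTriangle, pwBubble ε p ^ 2 ≤ ε := by
  calc ∫ p in refTriangle, pwBubble ε p ^ 2
      ≤ 1 * volume.real (refTriangle ∩ {p | p 1 < ε}) := by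
        refine setIntegral_le_mul_measureReal_of_eq_zero_off (measurableSet_strip ε)
          (volume_refTriangle_inter_strip_lt_top ε) (fun p hp => ?_) (fun p hp => ?_)
        · rw [pwBubble, if_neg (show ¬p 1 < ε from hp), zero_pow two_ne_zero]
        · rw [Real.norm_eq_abs, abs_pow]
          exact pow_le_one₀ (abs_nonneg _) (abs_pwBubble_le_one hε hp.1)
    _ ≤ ε := by rw [one_mul]; exact measureReal_refTriangle_inter_strip_le hε.le

theorem setIntegral_refTriangle_norm_pwBubbleGrad_sq_le {ε : ℝ} (hε : 0 < ε) (hε1 : ε ≤ 1) :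
    ∫ p in refTriangle, ‖pwBubbleGrad ε p‖ ^ 2 ≤ 9 / ε := by
  calc ∫ p in refTriangle, ‖pwBubbleGrad ε p‖ ^ 2
      ≤ (3 / ε) ^ 2 * volume.real (refTriangle ∩ {p | p 1 < ε}) := by
        refine setIntegral_le_mul_measureReal_of_eq_zero_off (measurableSet_strip ε)
          (volume_refTriangle_inter_strip_lt_top ε) (fun p hp => ?_) (fun p hp => ?_)
        · rw [pwBubbleGrad, if_neg (show ¬p 1 < ε from hp), norm_zero, zero_pow two_ne_zero]
        · rw [Real.norm_eq_abs, abs_pow, abs_norm]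
          exact pow_le_pow_left₀ (norm_nonneg _) (norm_pwBubbleGrad_le hε hε1 hp.1) 2
    _ ≤ (3 / ε) ^ 2 * ε := by
        gcongr
        exact measureReal_refTriangle_inter_strip_le hε.le
    _ = 9 / ε := by field_simp; ring

/-- `‖η̃_{F,ε}‖_{L²(T)} ≤ C ε^{1/2}` and `‖∇η̃_{F,ε}‖_{L²(T)} ≤ C ε^{-1/2}`
with `C` independent of `ε`. -/
theorem stmt_8 :
    ∃ C > 0, ∀ ε : ℝ, 0 < ε → ε ≤ 1 →
      Real.sqrt (∫ p in refTriangle, (pwBubble ε p) ^ 2) ≤ C * Real.sqrt ε ∧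
      Real.sqrt (∫ p in refTriangle, ‖pwBubbleGrad ε p‖ ^ 2) ≤ C / Real.sqrt ε := by
  refine ⟨3, by norm_num, fun ε hε hε1 => ⟨?_, ?_⟩⟩
  · calc Real.sqrt (∫ p in refTriangle, pwBubble ε p ^ 2)
        ≤ Real.sqrt ε := Real.sqrt_le_sqrt (setIntegral_refTriangle_pwBubble_sq_le hε)
      _ ≤ 3 * Real.sqrt ε := by linarith [Real.sqrt_nonneg ε]
  · calc Real.sqrt (∫ p in refTriangle, ‖pwBubbleGrad ε p‖ ^ 2)
        ≤ Real.sqrt (9 / ε) :=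
          Real.sqrt_le_sqrt (setIntegral_refTriangle_norm_pwBubbleGrad_sq_le hε hε1)
      _ = 3 / Real.sqrt ε := by
          rw [Real.sqrt_div' 9 hε.le, show (9 : ℝ) = 3 ^ 2 by norm_num, Real.sqrt_sq zero_le_three]
end

section
/- Let U, Λ be Hilbert spaces, a : U × U → R a bounded symmetric bilinear form that is an inner product inducing the norm of U, and b : Λ × U → R a bounded bilinear form satisfying sup_{0≠v∈U} b(μ,v)/‖v‖_U = ‖μ‖_Λ for all μ ∈ Λ. Then for every bounded linear functional f on U, the mixed problem: find (u,λ) ∈ U × Λ with a(u,v) + b(λ,v) = f(v) and b(μ,u) = 0 for all (v,μ) ∈ U × Λ, has a unique solution, and ‖u‖_U + ‖λ‖_Λ ≤ C‖f‖_{U'} with C an absolute constant. -/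
/-!
Riesz representation turns `b` into a map `B : Λ → U` with `⟪B μ, v⟫ = b μ v`, and the inf-sup
condition with constant `1` says exactly that `B` is a linear isometry. With `a = ⟪·, ·⟫` the
mixed system becomes `u + B λ = F`, `u ⊥ range B`, where `F` represents `f`. The range of an
isometry on a complete space is complete, so this is the orthogonal decomposition of `F`; it is
unique because `B` is injective, and Pythagoras gives `‖u‖² + ‖λ‖² = ‖F‖² = ‖f‖²`.
-/

open RealInnerProductSpace

theorem ContinuousLinearMap.sSup_div_norm_eq_opNorm {E : Type*} [NormedAddCommGroup E]
    [NormedSpace ℝ E] (g : E →L[ℝ] ℝ) :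
    sSup {r : ℝ | ∃ v : E, v ≠ 0 ∧ r = g v / ‖v‖} = ‖g‖ := by
  set S := {r : ℝ | ∃ v : E, v ≠ 0 ∧ r = g v / ‖v‖}
  have hle : ∀ r ∈ S, r ≤ ‖g‖ := by
    rintro r ⟨v, hv, rfl⟩
    rw [div_le_iff₀ (norm_pos_iff.2 hv)]
    exact (le_abs_self _).trans (g.le_opNorm v)
  have hbound : ∀ v : E, v ≠ 0 → |g v| ≤ sSup S * ‖v‖ := by
    intro v hv
    have hmem (w : E) (hw : w ≠ 0) : g w / ‖w‖ ≤ sSup S := le_csSup ⟨_, hle⟩ ⟨w, hw, rfl⟩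
    have hpos := norm_pos_iff.2 hv
    have h₁ := hmem v hv
    have h₂ := hmem (-v) (neg_ne_zero.2 hv)
    rw [map_neg, norm_neg, div_le_iff₀ hpos] at h₂
    rw [div_le_iff₀ hpos] at h₁
    exact abs_le.2 ⟨by linarith, h₁⟩
  -- on a trivial space `S = ∅`, and `sSup ∅ = 0` in `ℝ`
  have hnonneg : 0 ≤ sSup S := by
    by_cases h : ∃ v : E, v ≠ 0
    · obtain ⟨v, hv⟩ := h
      exact nonneg_of_mul_nonneg_left ((abs_nonneg _).trans (hbound v hv)) (norm_pos_iff.2 hv)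
    · push Not at h
      have : S = ∅ := Set.eq_empty_of_forall_notMem fun r ⟨v, hv, _⟩ => hv (h v)
      simp [this]
  refine le_antisymm (Real.sSup_le hle (norm_nonneg _)) (g.opNorm_le_bound' hnonneg fun v hv => ?_)
  exact hbound v (norm_ne_zero_iff.1 hv)

section Isometry

variable {𝕜 U Λ : Type*} [RCLike 𝕜] [NormedAddCommGroup U] [InnerProductSpace 𝕜 U]
  [NormedAddCommGroup Λ] [NormedSpace 𝕜 Λ] (B : Λ →ₗᵢ[𝕜] U)

instance LinearIsometry.hasOrthogonalProjection_range [CompleteSpace Λ] :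
    (LinearMap.range B.toLinearMap).HasOrthogonalProjection := by
  have : CompleteSpace (LinearMap.range B.toLinearMap) := by
    refine IsComplete.completeSpace_coe ?_
    rw [LinearMap.coe_range]
    exact B.isometry.isUniformInducing.isComplete_range
  infer_instance

theorem LinearIsometry.existsUnique_add_mem_orthogonal_range [CompleteSpace Λ] (F : U) :
    ∃! p : U × Λ, p.1 + B p.2 = F ∧ p.1 ∈ (LinearMap.range B.toLinearMap)ᗮ := by
  set K := LinearMap.range B.toLinearMap
  obtain ⟨w, ⟨μ, rfl⟩, u, hu, hwu⟩ := K.exists_add_mem_mem_orthogonal F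
  have hF : u + B μ = F := by rw [hwu, add_comm]; rfl
  refine ⟨(u, μ), ⟨hF, hu⟩, ?_⟩
  rintro ⟨u', μ'⟩ ⟨hF' : u' + B μ' = F, hu' : u' ∈ Kᗮ⟩
  have hdiff : u' - u = B (μ - μ') := by
    rw [map_sub, sub_eq_sub_iff_add_eq_add, hF', add_comm, ← hF]
  have hu : u' = u := sub_eq_zero.1 <|
    Submodule.disjoint_def.1 K.orthogonal_disjoint _ (hdiff ▸ ⟨μ - μ', rfl⟩) (Kᗮ.sub_mem hu' hu)
  have hμ : μ' = μ := B.injective (add_left_cancel (hu ▸ hF'.trans hF.symm))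
  rw [hu, hμ]

theorem LinearIsometry.norm_sq_add_norm_sq_of_mem_orthogonal_range {F u : U} {μ : Λ}
    (hF : u + B μ = F) (hu : u ∈ (LinearMap.range B.toLinearMap)ᗮ) :
    ‖u‖ ^ 2 + ‖μ‖ ^ 2 = ‖F‖ ^ 2 := by
  have horth : inner 𝕜 u (B μ) = 0 :=
    (Submodule.mem_orthogonal' _ _).1 hu _ ⟨μ, rfl⟩
  rw [← hF, ← B.norm_map μ, sq, sq, sq,
    norm_add_sq_eq_norm_sq_add_norm_sq_of_inner_eq_zero _ _ horth]

end Isometry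

section Riesz

variable {U Λ : Type*} [NormedAddCommGroup U] [InnerProductSpace ℝ U] [CompleteSpace U]
  [NormedAddCommGroup Λ] [NormedSpace ℝ Λ]

noncomputable def rieszIsometry (b : Λ →L[ℝ] U →L[ℝ] ℝ) (hb : ∀ μ, ‖b μ‖ = ‖μ‖) :
    Λ →ₗᵢ[ℝ] U where
  toLinearMap := (InnerProductSpace.toDual ℝ U).symm.toLinearEquiv.toLinearMap ∘ₗ
    (b : Λ →ₗ[ℝ] StrongDual ℝ U)
  norm_map' μ := ((InnerProductSpace.toDual ℝ U).symm.norm_map (b μ)).trans (hb μ)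

variable (b : Λ →L[ℝ] U →L[ℝ] ℝ) (hb : ∀ μ, ‖b μ‖ = ‖μ‖)

theorem inner_rieszIsometry_apply (μ : Λ) (v : U) : ⟪rieszIsometry b hb μ, v⟫ = b μ v :=
  InnerProductSpace.toDual_symm_apply

theorem mixedSystem_iff_add_mem_orthogonal (f : StrongDual ℝ U) (u : U) (l : Λ) :
    ((∀ v, ⟪u, v⟫ + b l v = f v) ∧ ∀ μ, b μ u = 0) ↔
      u + rieszIsometry b hb l = (InnerProductSpace.toDual ℝ U).symm f ∧
        u ∈ (LinearMap.range (rieszIsometry b hb).toLinearMap)ᗮ := by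
  have hfirst : (∀ v, ⟪u, v⟫ + b l v = f v) ↔
      u + rieszIsometry b hb l = (InnerProductSpace.toDual ℝ U).symm f := by
    simp only [← inner_rieszIsometry_apply b hb, ← InnerProductSpace.toDual_symm_apply (y := f),
      ← inner_add_left]
    exact ⟨ext_inner_right ℝ, fun h v => h ▸ rfl⟩
  have hsecond : (∀ μ, b μ u = 0) ↔ u ∈ (LinearMap.range (rieszIsometry b hb).toLinearMap)ᗮ := by
    simp only [Submodule.mem_orthogonal, LinearMap.mem_range, forall_exists_index,
      forall_apply_eq_imp_iff, LinearIsometry.coe_toLinearMap, inner_rieszIsometry_apply]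
  exact and_congr hfirst hsecond

end Riesz

/-- abstract Brezzi well-posedness. Let `U`, `Λ` be real Hilbert spaces,
`a` a bounded symmetric bilinear form on `U` which is an inner product inducing the
norm of `U` (hence it equals the inner product of `U`), and `b` a bounded bilinear form
on `Λ × U` with `sup_{v≠0} b(μ,v)/‖v‖ = ‖μ‖` for all `μ`.  Then for every bounded
linear functional `f` on `U` the mixed problem
`a(u,v) + b(λ,v) = f(v)`, `b(μ,u) = 0` has a unique solution `(u,λ)`, and
`‖u‖ + ‖λ‖ ≤ C ‖f‖` with an absolute constant `C`. -/
theorem stmt_12 :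
    ∃ C > 0,
      ∀ (U Λ : Type)
        [NormedAddCommGroup U] [InnerProductSpace ℝ U] [CompleteSpace U]
        [NormedAddCommGroup Λ] [InnerProductSpace ℝ Λ] [CompleteSpace Λ]
        (a : U →L[ℝ] U →L[ℝ] ℝ) (b : Λ →L[ℝ] U →L[ℝ] ℝ),
        (∀ u v : U, a u v = a v u) →
        (∀ u v : U, a u v = ⟪u, v⟫) →
        (∀ μ : Λ, sSup {r : ℝ | ∃ v : U, v ≠ 0 ∧ r = b μ v / ‖v‖} = ‖μ‖) →
        ∀ f : U →L[ℝ] ℝ,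
          (∃! p : U × Λ,
            (∀ v : U, a p.1 v + b p.2 v = f v) ∧ (∀ μ : Λ, b μ p.1 = 0)) ∧
          (∀ p : U × Λ,
            ((∀ v : U, a p.1 v + b p.2 v = f v) ∧ (∀ μ : Λ, b μ p.1 = 0)) →
            ‖p.1‖ + ‖p.2‖ ≤ C * ‖f‖) := by
  refine ⟨2, two_pos, fun U Λ _ _ _ _ _ _ a b _ ha hsup f => ?_⟩
  have hb (μ : Λ) : ‖b μ‖ = ‖μ‖ := (b μ).sSup_div_norm_eq_opNorm.symm.trans (hsup μ)
  set B := rieszIsometry b hb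
  simp only [ha, mixedSystem_iff_add_mem_orthogonal b hb]
  refine ⟨B.existsUnique_add_mem_orthogonal_range _, fun p ⟨hF, hu⟩ => ?_⟩
  have hpyth := B.norm_sq_add_norm_sq_of_mem_orthogonal_range hF hu
  rw [LinearIsometryEquiv.norm_map] at hpyth
  nlinarith [norm_nonneg p.1, norm_nonneg p.2, norm_nonneg f, sq_nonneg (‖p.1‖ - ‖p.2‖)]
end

section
/- In the setting of the Fortin criterion (a bounded coercive with constant α, boundedness constant ‖a‖; b bounded with constant ‖b‖ and discrete inf-sup constant γ_h > 0), let (u,λ) ∈ U × Λ solve the continuous mixed problem and (u_h,λ_h) ∈ U_h × Λ_h the discrete one with the same right-hand side functional. Then ‖u − u_h‖_U + ‖λ − λ_h‖_Λ ≤ C inf_{(v_h,μ_h)∈U_h×Λ_h} (‖u − v_h‖_U + ‖λ − μ_h‖_Λ), where C depends only on α, ‖a‖, ‖b‖, γ_h. -/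
/-!
Write `D = ‖u - vₕ‖`, `E = ‖λ - μₕ‖`, `X = ‖uₕ - vₕ‖`, `M = ‖λₕ - μₕ‖` and let `K` bound both `‖a‖` and
`‖b‖`. Galerkin orthogonality and the discrete inf-sup condition give `γₕ M ≤ K (D + X + E)`.
Testing the coercivity of `a` with `uₕ - vₕ ∈ Uₕ` and using both orthogonality relations gives
`α X² ≤ K (D + E) X + K M D`. Eliminating `M` leaves a quadratic inequality
`α X² ≤ p S X + q S²` with `S = D + E`, whence `X ≲ S`, then `M ≲ S`, and the triangle inequality
concludes.
-/

lemma le_mul_of_sq_le_mul_add_sq {α p q x s : ℝ} (hα : 0 < α) (hp : 0 ≤ p) (hq : 0 ≤ q)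
    (hx : 0 ≤ x) (hs : 0 ≤ s) (h : α * x ^ 2 ≤ p * s * x + q * s ^ 2) :
    x ≤ (1 + (p + q) / α) * s := by
  have hpq : 0 ≤ (p + q) / α * s := by positivity
  rcases le_total x s with hxs | hsx
  · linarith
  · have hlin : α * x ^ 2 ≤ (p + q) * s * x := by nlinarith [mul_le_mul_of_nonneg_left hsx hs]
    have hαx : α * x ≤ (p + q) * s := by
      rcases hx.eq_or_lt with rfl | hx
      · rw [mul_zero]; positivity
      · nlinarith
    have hxle : x ≤ (p + q) / α * s := by
      rw [div_mul_eq_mul_div, le_div_iff₀ hα]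
      linarith
    linarith

variable {U Λ : Type*} [SeminormedAddCommGroup U] [Module ℝ U]
  [SeminormedAddCommGroup Λ] [Module ℝ Λ]
  {a : U →ₗ[ℝ] U →ₗ[ℝ] ℝ} {b : Λ →ₗ[ℝ] U →ₗ[ℝ] ℝ} {Uh : Submodule ℝ U} {Λh : Submodule ℝ Λ}
  {K γ : ℝ} {u uh vh : U} {l lh mh : Λ}

/-- The discrete inf-sup condition `γ ‖μₕ‖ ≤ sup_{vₕ ∈ Uₕ \ 0} b(μₕ, vₕ) / ‖vₕ‖`, written without
a supremum. -/
def DiscreteInfSup (b : Λ →ₗ[ℝ] U →ₗ[ℝ] ℝ) (Uh : Submodule ℝ U) (Λh : Submodule ℝ Λ) (γ : ℝ) :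
    Prop :=
  ∀ μh ∈ Λh, ∀ c : ℝ, c < γ * ‖μh‖ → ∃ vh ∈ Uh, vh ≠ 0 ∧ c * ‖vh‖ < b μh vh

lemma DiscreteInfSup.mul_norm_le (hinfsup : DiscreteInfSup b Uh Λh γ) {μh : Λ} (hμh : μh ∈ Λh)
    (hK : ∀ wh ∈ Uh, b μh wh ≤ K * ‖wh‖) : γ * ‖μh‖ ≤ K := by
  by_contra! hlt
  obtain ⟨wh, hwh, -, hwh_lt⟩ := hinfsup μh hμh K hlt
  exact (hK wh hwh).not_gt hwh_lt

namespace MixedProblem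

lemma galerkin_orthogonality {f : U → ℝ} (hcont : ∀ v, a u v + b l v = f v)
    (hdisc : ∀ vh ∈ Uh, a uh vh + b lh vh = f vh) :
    ∀ wh ∈ Uh, a (u - uh) wh + b (l - lh) wh = 0 := by
  intro wh hwh
  simp only [map_sub, LinearMap.sub_apply]
  linarith [hcont wh, hdisc wh hwh]

variable (ha : ∀ u v : U, |a u v| ≤ K * ‖u‖ * ‖v‖) (hb : ∀ (μ : Λ) (v : U), |b μ v| ≤ K * ‖μ‖ * ‖v‖)
  (hgal : ∀ wh ∈ Uh, a (u - uh) wh + b (l - lh) wh = 0)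
include ha hb hgal

lemma inf_sup_bound (hinfsup : DiscreteInfSup b Uh Λh γ) (hlh : lh ∈ Λh) (hmh : mh ∈ Λh) :
    γ * ‖lh - mh‖ ≤ K * (‖u - uh‖ + ‖l - mh‖) := by
  refine hinfsup.mul_norm_le (Λh.sub_mem hlh hmh) fun wh hwh => ?_
  have hsplit : b (lh - mh) wh = a (u - uh) wh + b (l - mh) wh := by
    have := hgal wh hwh
    simp only [map_sub, LinearMap.sub_apply] at this ⊢
    linarith
  calc b (lh - mh) wh = a (u - uh) wh + b (l - mh) wh := hsplit
    _ ≤ K * ‖u - uh‖ * ‖wh‖ + K * ‖l - mh‖ * ‖wh‖ :=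
      add_le_add ((le_abs_self _).trans (ha _ _)) ((le_abs_self _).trans (hb _ _))
    _ = K * (‖u - uh‖ + ‖l - mh‖) * ‖wh‖ := by ring

lemma coercivity_bound {α : ℝ} (hcoer : ∀ u : U, α * ‖u‖ ^ 2 ≤ a u u)
    (hker : ∀ μh ∈ Λh, b μh (u - uh) = 0) (huh : uh ∈ Uh) (hvh : vh ∈ Uh) (hlh : lh ∈ Λh)
    (hmh : mh ∈ Λh) :
    α * ‖uh - vh‖ ^ 2 ≤
      K * (‖u - vh‖ + ‖l - mh‖) * ‖uh - vh‖ + K * ‖lh - mh‖ * ‖u - vh‖ := by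
  set w := uh - vh with hw_def
  -- `b (mh - lh) w = b (mh - lh) (u - vh)` because `w = (u - vh) - (u - uh)` and `mh - lh ∈ Λh`
  have hsplit : a w w = a (u - vh) w + b (l - mh) w + b (mh - lh) (u - vh) := by
    have h₁ := hgal w (Uh.sub_mem huh hvh)
    have h₂ := hker (mh - lh) (Λh.sub_mem hmh hlh)
    have hw : w = (u - vh) - (u - uh) := by rw [hw_def]; abel
    rw [hw] at h₁ ⊢
    simp only [map_sub, LinearMap.sub_apply] at h₁ h₂ ⊢
    linarith
  calc α * ‖w‖ ^ 2 ≤ a w w := hcoer w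
    _ = a (u - vh) w + b (l - mh) w + b (mh - lh) (u - vh) := hsplit
    _ ≤ K * ‖u - vh‖ * ‖w‖ + K * ‖l - mh‖ * ‖w‖ + K * ‖mh - lh‖ * ‖u - vh‖ :=
      add_le_add (add_le_add ((le_abs_self _).trans (ha _ _)) ((le_abs_self _).trans (hb _ _)))
        ((le_abs_self _).trans (hb _ _))
    _ = _ := by rw [norm_sub_rev mh lh]; ring

theorem error_le {α : ℝ} (hK : 0 ≤ K) (hα : 0 < α) (hγ : 0 < γ)
    (hcoer : ∀ u : U, α * ‖u‖ ^ 2 ≤ a u u) (hinfsup : DiscreteInfSup b Uh Λh γ)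
    (hker : ∀ μh ∈ Λh, b μh (u - uh) = 0) (huh : uh ∈ Uh) (hvh : vh ∈ Uh) (hlh : lh ∈ Λh)
    (hmh : mh ∈ Λh) :
    ‖u - uh‖ + ‖l - lh‖ ≤
      (2 + (K + 2 * (K ^ 2 / γ)) / α) * (1 + K / γ) * (‖u - vh‖ + ‖l - mh‖) := by
  have hcoer' := coercivity_bound ha hb hgal hcoer hker huh hvh hlh hmh
  set D := ‖u - vh‖
  set E := ‖l - mh‖
  set X := ‖uh - vh‖
  set M := ‖lh - mh‖
  set S := D + E
  have hu : ‖u - uh‖ ≤ D + X := by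
    simpa using norm_sub_le (u - vh) (uh - vh)
  have hl : ‖l - lh‖ ≤ E + M := by
    simpa [norm_sub_rev mh lh] using norm_add_le (l - mh) (mh - lh)
  have hM : M ≤ K / γ * (X + S) := by
    have := (inf_sup_bound ha hb hgal hinfsup hlh hmh).trans
      (mul_le_mul_of_nonneg_left (by linarith : ‖u - uh‖ + E ≤ X + S) hK)
    rw [div_mul_eq_mul_div, le_div_iff₀ hγ]
    linarith
  have hX : X ≤ (1 + (K + K ^ 2 / γ + K ^ 2 / γ) / α) * S := by
    have hMD : K * M * D ≤ K ^ 2 / γ * S * X + K ^ 2 / γ * S ^ 2 :=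
      calc K * M * D ≤ K * (K / γ * (X + S)) * S := by gcongr; linarith [norm_nonneg (l - mh)]
        _ = K ^ 2 / γ * S * X + K ^ 2 / γ * S ^ 2 := by ring
    refine le_mul_of_sq_le_mul_add_sq hα (by positivity) (by positivity) (norm_nonneg _)
      (by positivity) ?_
    linarith
  calc ‖u - uh‖ + ‖l - lh‖ ≤ S + X + K / γ * (X + S) := by linarith
    _ = (S + X) * (1 + K / γ) := by ring
    _ ≤ (S + (1 + (K + K ^ 2 / γ + K ^ 2 / γ) / α) * S) * (1 + K / γ) := by gcongr
    _ = _ := by ring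

end MixedProblem

/-- quasi-optimality for saddle point problems. Given constants
`α` (coercivity of `a`), `Ca = ‖a‖`, `Cb = ‖b‖` and a discrete inf-sup constant
`γh > 0`, there is `C > 0` depending only on `α, Ca, Cb, γh` such that for all
Hilbert spaces `U, Λ`, bilinear forms `a, b` with these constants, closed subspaces
`Uh ⊆ U`, `Λh ⊆ Λ` satisfying the discrete inf-sup condition with constant `γh`,
and solutions `(u,l)` of the continuous and `(uh,lh)` of the discrete mixed problem
with the same right-hand side `f`, one has
`‖u - uh‖ + ‖l - lh‖ ≤ C (‖u - vh‖ + ‖l - mh‖)` for all `vh ∈ Uh`, `mh ∈ Λh`. -/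
theorem stmt_14 (α Ca Cb γh : ℝ) (hα : 0 < α) (hγh : 0 < γh) :
    ∃ C > 0,
      ∀ (U Λ : Type)
        [NormedAddCommGroup U] [InnerProductSpace ℝ U] [CompleteSpace U]
        [NormedAddCommGroup Λ] [InnerProductSpace ℝ Λ] [CompleteSpace Λ]
        (a : U →ₗ[ℝ] U →ₗ[ℝ] ℝ) (b : Λ →ₗ[ℝ] U →ₗ[ℝ] ℝ),
        (∀ u v : U, |a u v| ≤ Ca * ‖u‖ * ‖v‖) →
        (∀ u : U, α * ‖u‖ ^ 2 ≤ a u u) →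
        (∀ (μ : Λ) (v : U), |b μ v| ≤ Cb * ‖μ‖ * ‖v‖) →
        ∀ (Uh : Submodule ℝ U) (Λh : Submodule ℝ Λ),
          IsClosed (Uh : Set U) → IsClosed (Λh : Set Λ) →
          (∀ lamh ∈ Λh, ∀ c : ℝ, c < γh * ‖lamh‖ →
            ∃ vh ∈ Uh, vh ≠ 0 ∧ c * ‖vh‖ < b lamh vh) →
          ∀ (f : U →L[ℝ] ℝ) (u uh : U) (l lh : Λ),
            uh ∈ Uh → lh ∈ Λh →
            (∀ v : U, a u v + b l v = f v) →
            (∀ μ : Λ, b μ u = 0) →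
            (∀ vh ∈ Uh, a uh vh + b lh vh = f vh) →
            (∀ mh ∈ Λh, b mh uh = 0) →
            ∀ vh ∈ Uh, ∀ mh ∈ Λh,
              ‖u - uh‖ + ‖l - lh‖ ≤ C * (‖u - vh‖ + ‖l - mh‖) := by
  set K := |Ca| + |Cb|
  refine ⟨(2 + (K + 2 * (K ^ 2 / γh)) / α) * (1 + K / γh), by positivity, ?_⟩
  intro U Λ _ _ _ _ _ _ a b ha hcoer hb Uh Λh _ _ hinfsup f u uh l lh huh hlh hcont hcker hdisc
    hdker vh hvh mh hmh
  have haK : ∀ u v : U, |a u v| ≤ K * ‖u‖ * ‖v‖ := fun u v =>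
    (ha u v).trans (by gcongr; exact (le_abs_self Ca).trans (le_add_of_nonneg_right (abs_nonneg _)))
  have hbK : ∀ (μ : Λ) (v : U), |b μ v| ≤ K * ‖μ‖ * ‖v‖ := fun μ v =>
    (hb μ v).trans (by gcongr; exact (le_abs_self Cb).trans (le_add_of_nonneg_left (abs_nonneg _)))
  have hker : ∀ μh ∈ Λh, b μh (u - uh) = 0 := fun μh hμh => by
    rw [map_sub, hcker, hdker μh hμh, sub_zero]
  exact MixedProblem.error_le haK hbK (MixedProblem.galerkin_orthogonality hcont hdisc)
    (by positivity) hα hγh hcoer hinfsup hker huh hvh hlh hmh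
end
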